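/- arXiv:1607.01233 — 9 statements merged into one kernel-verified Lean document; each statement's English description precedes it below -/
import Mathlib

section
/- If u is t-dominant over v (i.e., u ≠ v and D_t(v) ⊆ D_t(u)) then for every s > t (with s ≤ n), u is s-dominant over v, i.e., D_s(v) ⊆ D_s(u). -/
/-! A subsequence of `v` of length `n - s` can be extended, inside `v`, to one of length `n - t`;
by `t`-dominance that one is a subsequence of `u`, hence so is the original. -/

/-- The set of subsequences of `u` of length `u.length - t`. -/
def Dset (t : ℕ) (u : List Bool) : Set (List Bool) :=
  {w | w.Sublist u ∧ w.length = u.length - t}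

theorem List.Sublist.exists_sublist_sublist_length_eq {α : Type*} {l₁ l₂ : List α}
    (h : l₁.Sublist l₂) {m : ℕ} (h₁ : l₁.length ≤ m) (h₂ : m ≤ l₂.length) :
    ∃ l, l₁.Sublist l ∧ l.Sublist l₂ ∧ l.length = m := by
  induction h generalizing m with
  | slnil => exact ⟨[], .slnil, .slnil, by simpa using h₁.antisymm h₂⟩
  | @cons l₁ l₂ a h ih =>
    rcases (show m ≤ l₂.length + 1 from h₂).lt_or_eq with hlt | rfl
    · obtain ⟨l, hl₁, hl₂, hl⟩ := ih h₁ (Nat.lt_succ_iff.mp hlt)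
      exact ⟨l, hl₁, hl₂.cons a, hl⟩
    · exact ⟨a :: l₂, h.cons a, .refl _, rfl⟩
  | cons_cons a h ih =>
    simp only [List.length_cons] at h₁ h₂
    obtain ⟨l, hl₁, hl₂, hl⟩ := ih (m := m - 1) (by omega) (by omega)
    exact ⟨a :: l, hl₁.cons_cons a, hl₂.cons_cons a, by simp only [List.length_cons]; omega⟩

theorem dominant_mono_general (n t s : ℕ) (u v : List Bool)
    (hu : u.length = n) (hv : v.length = n)
    (hdom : Dset t v ⊆ Dset t u) (hts : t < s) :
    Dset s v ⊆ Dset s u := by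
  rintro w ⟨hwv, hw⟩
  obtain ⟨w', hww', hw'v, hw'⟩ :=
    hwv.exists_sublist_sublist_length_eq (m := v.length - t) (by omega) (Nat.sub_le _ _)
  have hw'u : w'.Sublist u := (hdom ⟨hw'v, hw'⟩).1
  exact ⟨hww'.trans hw'u, by omega⟩

theorem dominant_mono (n t s : ℕ) (u v : List Bool)
    (hu : u.length = n) (hv : v.length = n) (hne : u ≠ v)
    (hdom : Dset t v ⊆ Dset t u) (hts : t < s) (hsn : s ≤ n) :
    Dset s v ⊆ Dset s u :=
  dominant_mono_general n t s u v hu hv hdom hts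
end

section
/- Let u be a binary word of length n with u ≠ 1^n. Then D_t(1^n) ⊆ D_t(u) if and only if the Hamming weight of u is at least n−t. -/
theorem Dset_replicate (t n : ℕ) (a : Bool) :
    Dset t (List.replicate n a) = {List.replicate (n - t) a} := by
  ext w
  simp only [Dset, Set.mem_ofPred_eq, Set.mem_singleton_iff, List.length_replicate]
  constructor
  · rintro ⟨hsub, hlen⟩
    obtain ⟨k, -, rfl⟩ := List.sublist_replicate_iff.1 hsub
    rw [List.length_replicate] at hlen
    rw [hlen]
  · rintro rfl
    exact ⟨(List.replicate_sublist_replicate a).2 (Nat.sub_le n t), List.length_replicate⟩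

theorem replicate_mem_Dset_iff (t : ℕ) (u : List Bool) (a : Bool) :
    List.replicate (u.length - t) a ∈ Dset t u ↔ u.length - t ≤ u.count a := by
  simp [Dset, List.replicate_sublist_iff]

theorem dominant_over_ones_general (n t : ℕ) (u : List Bool)
    (hu : u.length = n) :
    Dset t (List.replicate n true) ⊆ Dset t u ↔ n - t ≤ u.count true := by
  subst hu
  rw [Dset_replicate, Set.singleton_subset_iff, replicate_mem_Dset_iff]

theorem dominant_over_ones (n t : ℕ) (ht : t < n) (u : List Bool)
    (hu : u.length = n) (hne : u ≠ List.replicate n true) :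
    Dset t (List.replicate n true) ⊆ Dset t u ↔ n - t ≤ u.count true :=
  dominant_over_ones_general n t u hu
end

section
/- Let u, v be distinct binary words of length n with v ∉ {0^n, 1^n} and D_1(v) ⊆ D_1(u). Then there exist p, q with {p,q} = {0,1} and a positive integer m with 1 ≤ m ≤ n−1 such that v = p^m q^{n−m} and u = p^{m−1} q p q^{n−m−1}. -/
open List

theorem List.eq_of_erase_eq_erase {α : Type*} [DecidableEq α] {l : List α} {x y : α}
    (hx : x ∈ l) (h : l.erase x = l.erase y) : x = y := by
  by_contra hxy
  have hcount := congrArg (count x) h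
  rw [count_erase_self, count_erase_of_ne hxy] at hcount
  have := count_pos_iff.2 hx
  omega

theorem Bool.forall_mem_of_ne_replicate {v : List Bool} (h0 : v ≠ replicate v.length false)
    (h1 : v ≠ replicate v.length true) (c : Bool) : c ∈ v := by
  by_contra hc
  cases c
  · exact h1 (eq_replicate_iff.2 ⟨rfl, fun x hx => by cases x <;> simp_all⟩)
  · exact h0 (eq_replicate_iff.2 ⟨rfl, fun x hx => by cases x <;> simp_all⟩)

section Dset

variable {a b : Bool} {u v : List Bool}

theorem mem_Dset_one_cons {w : List Bool} :
    w ∈ Dset 1 (a :: v) ↔ w.Sublist (a :: v) ∧ w.length = v.length := by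
  simp [Dset]

theorem exists_eq_cons_of_Dset_one_cons_subset (hdom : Dset 1 (a :: v) ⊆ Dset 1 (a :: u))
    (hlen : u.length = v.length) (hne : u ≠ v) : ∃ w, v = a :: w := by
  have hsub := (hdom (mem_Dset_one_cons.2 ⟨sublist_cons_self a v, rfl⟩)).1
  rcases v with _ | ⟨c, w⟩
  · exact absurd (length_eq_zero_iff.1 hlen) hne
  · refine ⟨w, congrArg (· :: w) (by_contra fun hca => hne ?_)⟩
    exact ((Sublist.of_cons_of_ne hca hsub).eq_of_length hlen.symm).symm

theorem Dset_one_subset_of_cons (hdom : Dset 1 (a :: v) ⊆ Dset 1 (a :: u))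
    (hlen : u.length = v.length) : Dset 1 v ⊆ Dset 1 u := by
  rcases v with _ | ⟨c, v⟩
  · rw [length_eq_zero_iff.1 hlen]
  rintro w ⟨hw, hwlen⟩
  have hmem : a :: w ∈ Dset 1 (a :: c :: v) :=
    mem_Dset_one_cons.2 ⟨hw.cons_cons a, by simpa using hwlen⟩
  exact ⟨cons_sublist_cons.1 (hdom hmem).1, by simp [hwlen, hlen]⟩

theorem eq_cons_erase_of_Dset_one_cons_subset (hab : a ≠ b) (hlen : u.length = v.length)
    (hdom : Dset 1 (a :: v) ⊆ Dset 1 (b :: u)) {x : Bool} (hx : x ∈ v) :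
    u = a :: v.erase x := by
  have hpos := length_pos_of_mem hx
  have hmem : a :: v.erase x ∈ Dset 1 (a :: v) :=
    mem_Dset_one_cons.2 ⟨(erase_sublist).cons_cons a, by simp [length_erase_of_mem hx]; omega⟩
  refine ((Sublist.of_cons_of_ne hab (hdom hmem).1).eq_of_length ?_).symm
  simp [length_erase_of_mem hx, hlen]
  omega

theorem eq_replicate_of_Dset_one_cons_subset (hab : a ≠ b) (hlen : u.length = v.length)
    (hdom : Dset 1 (a :: v) ⊆ Dset 1 (b :: u)) (hb : b ∈ v) :
    v = replicate v.length b ∧ u = a :: replicate (v.length - 1) b := by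
  have hu := eq_cons_erase_of_Dset_one_cons_subset hab hlen hdom hb
  have ha : a ∉ v := fun ha => hab <| eq_of_erase_eq_erase ha <| (cons.inj <|
    (eq_cons_erase_of_Dset_one_cons_subset hab hlen hdom ha).symm.trans hu).2
  have hv : v = replicate v.length b := eq_replicate_iff.2 ⟨rfl, fun x hx =>
    (Bool.eq_not_iff.2 (ne_of_mem_of_not_mem hx ha)).trans (Bool.eq_not_iff.2 hab.symm).symm⟩
  refine ⟨hv, ?_⟩
  rw [hu, hv, erase_replicate_self, length_replicate]

end Dset

theorem exists_replicate_of_Dset_one_subset :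
    ∀ {u v : List Bool}, u.length = v.length → u ≠ v → (∀ c, c ∈ v) →
      Dset 1 v ⊆ Dset 1 u →
      ∃ p q m k, p ≠ q ∧ v = replicate (m + 1) p ++ replicate (k + 1) q ∧
        u = replicate m p ++ q :: p :: replicate k q
  | _, [], _, _, hv, _ => absurd (hv true) not_mem_nil
  | [], _ :: _, hlen, _, _, _ => by simp at hlen
  | b :: u, a :: v, hlen, hne, hv, hdom => by
    have hlen' : u.length = v.length := by simpa using hlen
    by_cases hab : a = b
    · subst hab
      have hne' : u ≠ v := fun h => hne (h ▸ rfl)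
      obtain ⟨w, rfl⟩ := exists_eq_cons_of_Dset_one_cons_subset hdom hlen' hne'
      have hv' (c : Bool) : c ∈ a :: w := by
        rcases mem_cons.1 (hv c) with rfl | h
        exacts [mem_cons_self, h]
      obtain ⟨p, q, m, k, hpq, hvw, hu⟩ :=
        exists_replicate_of_Dset_one_subset hlen' hne' hv' (Dset_one_subset_of_cons hdom hlen')
      obtain rfl : a = p := (cons.inj hvw).1
      exact ⟨a, q, m + 1, k, hpq, by rw [hvw]; rfl, by rw [hu]; rfl⟩
    · have hb : b ∈ v := (mem_cons.1 (hv b)).resolve_left (Ne.symm hab)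
      obtain ⟨hv, hu⟩ := eq_replicate_of_Dset_one_cons_subset hab hlen' hdom hb
      obtain ⟨k, hk⟩ : ∃ k, v.length = k + 1 :=
        Nat.exists_eq_succ_of_ne_zero (length_pos_of_mem hb).ne'
      refine ⟨a, b, 0, k, hab, ?_, ?_⟩
      · rw [hv, hk]; rfl
      · rw [hu, hk]; rfl

theorem one_dominant_classification (n : ℕ) (u v : List Bool)
    (hu : u.length = n) (hv : v.length = n) (hne : u ≠ v)
    (hv0 : v ≠ List.replicate n false) (hv1 : v ≠ List.replicate n true)
    (hdom : Dset 1 v ⊆ Dset 1 u) :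
    ∃ (p q : Bool) (m : ℕ), p ≠ q ∧ 1 ≤ m ∧ m ≤ n - 1 ∧
      v = List.replicate m p ++ List.replicate (n - m) q ∧
      u = List.replicate (m - 1) p ++ [q, p] ++ List.replicate (n - m - 1) q := by
  subst hv
  obtain ⟨p, q, m, k, hpq, hvpq, hupq⟩ := exists_replicate_of_Dset_one_subset hu hne
    (Bool.forall_mem_of_ne_replicate hv0 hv1) hdom
  have hn : v.length = m + 1 + (k + 1) := by simp [hvpq]
  refine ⟨p, q, m + 1, hpq, by omega, by omega, ?_, ?_⟩
  · rwa [hn, Nat.add_sub_cancel_left]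
  · rw [hupq, hn, Nat.add_sub_cancel, Nat.add_sub_cancel_left, Nat.add_sub_cancel]
    simp
end

section
/- For every n ≥ 2, {p,q} = {0,1} and 1 ≤ m ≤ n−1, the word u = p^{m−1} q p q^{n−m−1} satisfies D_1(p^m q^{n−m}) ⊆ D_1(u), i.e., u is 1-dominant over p^m q^{n−m}. -/
theorem one_dominant_pairs (n m : ℕ) (hn : 2 ≤ n) (hm1 : 1 ≤ m) (hm2 : m ≤ n - 1)
    (p q : Bool) (hpq : p ≠ q) :
    Dset 1 (List.replicate m p ++ List.replicate (n - m) q) ⊆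
      Dset 1 (List.replicate (m - 1) p ++ [q, p] ++ List.replicate (n - m - 1) q) := by
  intro w hw
  obtain ⟨hsub, hlen⟩ := hw
  rw [List.sublist_append_iff] at hsub
  obtain ⟨w1, w2, rfl, h1, h2⟩ := hsub
  rw [List.sublist_replicate_iff] at h1 h2
  obtain ⟨i, hi, rfl⟩ := h1
  obtain ⟨j, hj, rfl⟩ := h2
  simp only [List.length_append, List.length_replicate] at hlen
  constructor
  · rcases (by omega : i = m ∧ j = n - m - 1 ∨ i = m - 1 ∧ j = n - m) with ⟨hI, hJ⟩ | ⟨hI, hJ⟩ <;> rw [hI, hJ]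
    · have h : (List.replicate m p : List Bool) = List.replicate (m - 1) p ++ [p] := by
        rw [← List.replicate_succ']; congr 1; omega
      rw [h, List.append_assoc, List.append_assoc]
      refine List.Sublist.append (List.Sublist.refl _) ?_
      exact List.Sublist.append (by simp) (List.Sublist.refl _)
    · have h : (List.replicate (n - m) q : List Bool) = [q] ++ List.replicate (n - m - 1) q := by
        have e : n - m = (n - m - 1) + 1 := by omega
        rw [e, List.replicate_succ]
        rfl
      rw [h, List.append_assoc]
      refine List.Sublist.append (List.Sublist.refl _) ?_
      exact List.Sublist.append (by simp) (List.Sublist.refl _)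
  · simp only [List.length_append, List.length_replicate, List.length_cons]
    simp only [List.length_nil]
    omega
end

section
/- For n ≥ 3, m ≥ 0 with m ≤ n−2 and {p,q} = {0,1}, the word u = p^m q p^{n−m−2} q satisfies D_2(p^{n−1} q) ⊆ D_2(u). -/
theorem two_dominant_family_one (n m : ℕ) (hn : 3 ≤ n) (hm : m ≤ n - 2)
    (p q : Bool) (hpq : p ≠ q) :
    Dset 2 (List.replicate (n - 1) p ++ [q]) ⊆
      Dset 2 (List.replicate m p ++ [q] ++ List.replicate (n - m - 2) p ++ [q]) := by
  have hsplit : List.Sublist (List.replicate (n - 2) p)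
      (List.replicate m p ++ [q] ++ List.replicate (n - m - 2) p) := by
    have : List.replicate (n - 2) p
        = List.replicate m p ++ List.replicate (n - m - 2) p := by
      rw [← List.replicate_add]; congr 1; omega
    rw [this, List.append_assoc]
    exact (List.Sublist.refl _).append ((List.sublist_cons_self _ _))
  rintro w ⟨hsub, hlen⟩
  simp only [List.length_append, List.length_replicate, List.length_singleton] at hlen
  rw [List.sublist_append_iff] at hsub
  obtain ⟨a, b, rfl, ha, hb⟩ := hsub
  rw [List.sublist_replicate_iff] at ha
  obtain ⟨k, hk, rfl⟩ := ha
  constructor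
  · rcases List.sublist_singleton.mp hb with rfl | rfl
    · have : k = n - 2 := by
        simp at hlen; omega
      subst this
      simpa using hsplit.trans (List.sublist_append_left _ [q])
    · have hk3 : k = n - 3 := by simp at hlen; omega
      subst hk3
      have h1 : List.Sublist (List.replicate (n - 3) p) (List.replicate (n - 2) p) := by
        apply List.replicate_sublist_replicate _ |>.mpr; omega
      exact (h1.trans hsplit).append (List.Sublist.refl [q])
  · simp only [List.length_append, List.length_replicate, List.length_singleton] at hlen ⊢
    omega
end

section
/- For n ≥ 4 and {p,q} = {0,1}, the word u = q p q^{n−4} p q satisfies D_2(p q^{n−2} p) ⊆ D_2(u), i.e., u is 2-dominant over p q^{n−2} p. -/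
theorem two_dominant_family_three (n : ℕ) (hn : 4 ≤ n) (p q : Bool) (hpq : p ≠ q) :
    Dset 2 ([p] ++ List.replicate (n - 2) q ++ [p]) ⊆
      Dset 2 ([q, p] ++ List.replicate (n - 4) q ++ [p, q]) := by
  obtain ⟨m, rfl⟩ : ∃ m, n = m + 4 := ⟨n - 4, by omega⟩
  clear hn
  simp only [show m + 4 - 2 = m + 2 from rfl, show m + 4 - 4 = m from rfl]
  intro w hw
  obtain ⟨hsub, hlen⟩ := hw
  simp only [List.length_append, List.length_replicate, List.length_cons,
    List.length_singleton] at hlen ⊢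
  rw [List.append_assoc, List.sublist_append_iff] at hsub
  obtain ⟨w1, w23, rfl, h1, h23⟩ := hsub
  rw [List.sublist_append_iff] at h23
  obtain ⟨w2, w3, rfl, h2, h3⟩ := h23
  rw [List.sublist_replicate_iff] at h2
  obtain ⟨k, hk, rfl⟩ := h2
  have hq : (List.replicate m q ++ [q]).Sublist (List.replicate m q ++ [p, q]) :=
    (List.sublist_cons_self p [q]).append_left _
  have hp : (List.replicate m q ++ [p]).Sublist (List.replicate m q ++ [p, q]) :=
    (List.sublist_append_left [p] [q]).append_left _
  rcases List.sublist_singleton.mp h1 with rfl | rfl <;>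
    rcases List.sublist_singleton.mp h3 with rfl | rfl <;>
    simp only [List.length_append, List.length_replicate, List.nil_append,
      List.append_nil, List.length_nil, List.length_singleton] at hlen <;>
    refine ⟨?_, by simp; omega⟩ <;>
    simp only [List.nil_append, List.append_nil, List.cons_append, List.append_assoc]
  · obtain rfl : k = m + 2 := by omega
    show (List.replicate (m + 1 + 1) q).Sublist (q :: p :: (List.replicate m q ++ [p, q]))
    rw [List.replicate_succ, List.replicate_succ']
    exact List.Sublist.cons₂ q (hq.cons p)
  · obtain rfl : k = m + 1 := by omega
    show (List.replicate (m + 1) q ++ [p]).Sublist (q :: p :: (List.replicate m q ++ [p, q]))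
    rw [List.replicate_succ]
    exact List.Sublist.cons₂ q (hp.cons p)
  · obtain rfl : k = m + 1 := by omega
    show (p :: List.replicate (m + 1) q).Sublist (q :: p :: (List.replicate m q ++ [p, q]))
    rw [List.replicate_succ']
    exact (List.Sublist.cons₂ p hq).cons q
  · obtain rfl : k = m := by omega
    show (p :: (List.replicate k q ++ [p])).Sublist (q :: p :: (List.replicate k q ++ [p, q]))
    exact (List.Sublist.cons₂ p hp).cons q
end

section
/- For n ≥ 4 and {p,q} = {0,1}, the word u = q p^{n−3} q p satisfies D_2(p^{n−1} q) ⊆ D_2(u), i.e., u is 2-dominant over p^{n−1} q. -/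
/-! Deleting two letters from `p^(n-1) q` leaves `p^(n-2)` or `p^(n-3) q`; the first is obtained from
`u = q p^(n-3) q p` by deleting both `q`s, the second by deleting the first `q` and the last `p`. -/

namespace List

variable {α : Type*}

theorem sublist_replicate_append_singleton_iff {l : List α} {a b : α} {m : ℕ} :
    l <+ replicate m a ++ [b] ↔ ∃ k ≤ m, l = replicate k a ∨ l = replicate k a ++ [b] := by
  simp only [sublist_append_iff, sublist_replicate_iff, sublist_singleton]
  constructor
  · rintro ⟨_, _, rfl, ⟨k, hk, rfl⟩, rfl | rfl⟩
    exacts [⟨k, hk, .inl (append_nil _)⟩, ⟨k, hk, .inr rfl⟩]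
  · rintro ⟨k, hk, rfl | rfl⟩
    exacts [⟨_, [], (append_nil _).symm, ⟨k, hk, rfl⟩, .inl rfl⟩, ⟨_, _, rfl, ⟨k, hk, rfl⟩, .inr rfl⟩]

theorem replicate_succ_sublist_singleton_append_replicate_append (m : ℕ) (p q : α) :
    replicate (m + 1) p <+ [q] ++ replicate m p ++ [q, p] := by
  rw [replicate_succ']
  exact ((Sublist.refl _).append (by simp)).cons q

theorem replicate_append_singleton_sublist_singleton_append_replicate_append (m : ℕ) (p q : α) :
    replicate m p ++ [q] <+ [q] ++ replicate m p ++ [q, p] :=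
  ((Sublist.refl _).append (by simp)).cons q

end List

theorem two_dominant_family_four_general (n : ℕ) (hn : 4 ≤ n) (p q : Bool) :
    Dset 2 (List.replicate (n - 1) p ++ [q]) ⊆
      Dset 2 ([q] ++ List.replicate (n - 3) p ++ [q, p]) := by
  obtain ⟨m, rfl⟩ : ∃ m, n = m + 4 := ⟨n - 4, by omega⟩
  rintro w ⟨hsub, hlen⟩
  refine ⟨?_, by simp_all⟩
  obtain ⟨k, -, rfl | rfl⟩ := List.sublist_replicate_append_singleton_iff.1 hsub
  · obtain rfl : k = m + 2 := by simpa using hlen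
    exact List.replicate_succ_sublist_singleton_append_replicate_append _ p q
  · obtain rfl : k = m + 1 := by simpa using hlen
    exact List.replicate_append_singleton_sublist_singleton_append_replicate_append _ p q

theorem two_dominant_family_four (n : ℕ) (hn : 4 ≤ n) (p q : Bool) (hpq : p ≠ q) :
    Dset 2 (List.replicate (n - 1) p ++ [q]) ⊆
      Dset 2 ([q] ++ List.replicate (n - 3) p ++ [q, p]) :=
  two_dominant_family_four_general n hn p q
end

section
/- Let u = p q u₁ and v = p q v₁ be binary words of length n ≥ 3 (with u₁, v₁ of length n−2 and {p,q} = {0,1}). If D_2(v) ⊆ D_2(u) and the first coordinates satisfy u_1 = v_1 = p, u_2 = v_2 = q, then D_1(v₁) ⊆ D_1(u₁). -/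
theorem List.Sublist.of_cons_sublist_cons_cons {α : Type*} {a b : α} {w l : List α}
    (hba : b ≠ a) (h : (b :: w).Sublist (a :: b :: l)) : w.Sublist l :=
  (h.of_cons_of_ne hba).of_cons_cons

theorem cons_mem_Dset_succ_cons_cons {t : ℕ} {w l : List Bool} (a b : Bool)
    (hw : w ∈ Dset t l) (ht : t ≤ l.length) : b :: w ∈ Dset (t + 1) (a :: b :: l) := by
  obtain ⟨hsub, hlen⟩ := hw
  refine ⟨(hsub.cons_cons b).cons a, ?_⟩
  simp only [List.length_cons]
  omega

theorem mem_Dset_of_cons_mem_Dset_succ_cons_cons {t : ℕ} {w l : List Bool} {a b : Bool}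
    (hba : b ≠ a) (hw : b :: w ∈ Dset (t + 1) (a :: b :: l)) : w ∈ Dset t l := by
  obtain ⟨hsub, hlen⟩ := hw
  refine ⟨hsub.of_cons_sublist_cons_cons hba, ?_⟩
  simp only [List.length_cons] at hlen
  omega

theorem two_dominant_common_prefix_general (n : ℕ) (hn : 3 ≤ n) (p q : Bool) (hpq : p ≠ q)
    (u₁ v₁ : List Bool) (hv₁ : v₁.length = n - 2)
    (hdom : Dset 2 (p :: q :: v₁) ⊆ Dset 2 (p :: q :: u₁)) :
    Dset 1 v₁ ⊆ Dset 1 u₁ := fun _ hw =>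
  mem_Dset_of_cons_mem_Dset_succ_cons_cons hpq.symm
    (hdom (cons_mem_Dset_succ_cons_cons p q hw (by omega)))

theorem two_dominant_common_prefix (n : ℕ) (hn : 3 ≤ n) (p q : Bool) (hpq : p ≠ q)
    (u₁ v₁ : List Bool) (hu₁ : u₁.length = n - 2) (hv₁ : v₁.length = n - 2)
    (hdom : Dset 2 (p :: q :: v₁) ⊆ Dset 2 (p :: q :: u₁)) :
    Dset 1 v₁ ⊆ Dset 1 u₁ :=
  two_dominant_common_prefix_general n hn p q hpq u₁ v₁ hv₁ hdom
end

section
/- For n ≥ 4, 1 ≤ m ≤ n−3 and {p,q} = {0,1}, the word u = p^{m−1} q p q p q^{n−m−3} satisfies D_2(p^m q p q^{n−m−2}) ⊆ D_2(u). -/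
lemma repl_split_right (a : ℕ) (h : 1 ≤ a) (x : Bool) :
    List.replicate a x = List.replicate (a - 1) x ++ [x] := by
  conv_lhs => rw [show a = (a - 1) + 1 by omega]
  rw [List.replicate_succ']

lemma repl_split_left (a : ℕ) (h : 1 ≤ a) (x : Bool) :
    List.replicate a x = x :: List.replicate (a - 1) x := by
  conv_lhs => rw [show a = (a - 1) + 1 by omega]
  rw [List.replicate_succ]

lemma helper (p q : Bool) (a c m B : ℕ) (mid : List Bool)
    (hm : a ≤ m) (hc : c ≤ B) (hmid : mid.Sublist [q, p, q, p]) :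
    (List.replicate a p ++ mid ++ List.replicate c q).Sublist
      (List.replicate m p ++ [q, p, q, p] ++ List.replicate B q) :=
  (((List.replicate_sublist_replicate p).mpr hm).append hmid).append
    ((List.replicate_sublist_replicate q).mpr hc)

theorem two_dominant_family_five (n m : ℕ) (hn : 4 ≤ n) (hm1 : 1 ≤ m)
    (hm2 : m ≤ n - 3) (p q : Bool) (hpq : p ≠ q) :
    Dset 2 (List.replicate m p ++ [q, p] ++ List.replicate (n - m - 2) q) ⊆
      Dset 2 (List.replicate (m - 1) p ++ [q, p, q, p] ++ List.replicate (n - m - 3) q) := by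
  rintro w ⟨hsub, hlen⟩
  set B := n - m - 2 with hB
  have hB1 : 1 ≤ B := by omega
  have hB3 : n - m - 3 = B - 1 := by omega
  rw [List.append_assoc, List.sublist_append_iff] at hsub
  obtain ⟨w1, w23, rfl, h1, h23⟩ := hsub
  rw [List.sublist_append_iff] at h23
  obtain ⟨w2, w3, rfl, h2, h3⟩ := h23
  obtain ⟨a, ha, rfl⟩ := List.sublist_replicate_iff.mp h1
  obtain ⟨c, hc, rfl⟩ := List.sublist_replicate_iff.mp h3
  simp only [List.length_append, List.length_replicate] at hlen
  have h2' : w2 = [] ∨ w2 = [q] ∨ w2 = [p] ∨ w2 = [q, p] := by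
    simp [List.sublist_cons_iff] at h2; aesop
  constructor
  · -- the sublist part
    rw [hB3]
    rcases h2' with rfl | rfl | rfl | rfl
    · -- w2 = [], so a = m, c = B
      have hac : a = m ∧ c = B := by simp at hlen; omega
      obtain ⟨rfl2, rfl3⟩ := hac
      rw [rfl2, rfl3]
      rw [repl_split_right m hm1 p, repl_split_left B hB1 q]
      have := helper p q (m - 1) (B - 1) (m - 1) (B - 1) [p, q]
        le_rfl le_rfl (.cons _ (.cons₂ _ (.cons₂ _ (List.nil_sublist _))))
      simpa using this
    · -- w2 = [q]
      have hac : (a = m ∧ c = B - 1) ∨ (a = m - 1 ∧ c = B) := by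
        simp at hlen; omega
      rcases hac with ⟨rfl2, rfl3⟩ | ⟨rfl2, rfl3⟩ <;> rw [rfl2, rfl3]
      · rw [repl_split_right m hm1 p]
        have := helper p q (m - 1) (B - 1) (m - 1) (B - 1) [p, q]
          le_rfl le_rfl (.cons _ (.cons₂ _ (.cons₂ _ (List.nil_sublist _))))
        simpa using this
      · rw [repl_split_left B hB1 q]
        have := helper p q (m - 1) (B - 1) (m - 1) (B - 1) [q, q]
          le_rfl le_rfl (.cons₂ _ (.cons _ (.cons₂ _ (List.nil_sublist _))))
        simpa using this
    · -- w2 = [p]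
      have hac : (a = m ∧ c = B - 1) ∨ (a = m - 1 ∧ c = B) := by
        simp at hlen; omega
      rcases hac with ⟨rfl2, rfl3⟩ | ⟨rfl2, rfl3⟩ <;> rw [rfl2, rfl3]
      · rw [repl_split_right m hm1 p]
        have := helper p q (m - 1) (B - 1) (m - 1) (B - 1) [p, p]
          le_rfl le_rfl (.cons _ (.cons₂ _ (.cons _ (.cons₂ _ (List.nil_sublist _)))))
        simpa using this
      · rw [repl_split_left B hB1 q]
        have := helper p q (m - 1) (B - 1) (m - 1) (B - 1) [p, q]
          le_rfl le_rfl (.cons _ (.cons₂ _ (.cons₂ _ (List.nil_sublist _))))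
        simpa using this
    · -- w2 = [q, p]
      have hac : (a = m ∧ c = B - 2 ∧ 2 ≤ B) ∨ (a = m - 1 ∧ c = B - 1) ∨
          (a = m - 2 ∧ c = B ∧ 2 ≤ m) := by
        simp at hlen; omega
      rcases hac with ⟨rfl2, rfl3, hB2⟩ | ⟨rfl2, rfl3⟩ | ⟨rfl2, rfl3, hm2'⟩ <;> rw [rfl2, rfl3]
      · rw [repl_split_right m hm1 p]
        have := helper p q (m - 1) (B - 2) (m - 1) (B - 1) [p, q, p]
          le_rfl (by omega) (.cons _ (List.Sublist.refl _))
        simpa using this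
      · have := helper p q (m - 1) (B - 1) (m - 1) (B - 1) [q, p]
          le_rfl le_rfl (.cons₂ _ (.cons₂ _ (List.nil_sublist _)))
        simpa using this
      · rw [repl_split_left B hB1 q]
        have := helper p q (m - 2) (B - 1) (m - 1) (B - 1) [q, p, q]
          (by omega) le_rfl (.cons₂ _ (.cons₂ _ (.cons₂ _ (List.nil_sublist _))))
        simpa using this
  · -- the length part
    simp only [List.length_append, List.length_replicate]
    rcases h2' with rfl | rfl | rfl | rfl <;> simp at hlen ⊢ <;> omega
end
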